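/- arXiv:1912.03793 — 3 statements merged into one kernel-verified Lean document; each statement's English description precedes it below -/
import Mathlib

section
/- Let K > 0 and ψ > 0 be real numbers. Then (ψ − K)⁺ − K (ln ψ − ln K)⁺ ≥ ((√ψ − √K)⁺)², where x⁺ = max(x, 0). -/
/-! Applying `log x ≤ x - 1` at `x = √ψ / √K` gives `K (ln ψ - ln K) ≤ 2 √K (√ψ - √K)`, which
rearranges to `(√ψ - √K)² ≤ (ψ - K) - K (ln ψ - ln K)` for all positive `K, ψ`. When `ψ ≥ K` every
positive part is the quantity itself, and when `ψ ≤ K` every positive part vanishes. -/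

open Real

lemma mul_log_sub_log_le {K ψ : ℝ} (hK : 0 < K) (hψ : 0 < ψ) :
    K * (log ψ - log K) ≤ 2 * √K * (√ψ - √K) := by
  have hsK : 0 < √K := sqrt_pos.2 hK
  have hlog : log (√ψ / √K) = (log ψ - log K) / 2 := by
    rw [log_div (sqrt_pos.2 hψ).ne' hsK.ne', log_sqrt hψ.le, log_sqrt hK.le]
    ring
  calc K * (log ψ - log K) = 2 * √K ^ 2 * log (√ψ / √K) := by
        rw [hlog, sq_sqrt hK.le]; ring
    _ ≤ 2 * √K ^ 2 * (√ψ / √K - 1) := by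
        gcongr; exact log_le_sub_one_of_pos (by positivity)
    _ = 2 * √K * (√ψ - √K) := by field_simp

lemma sq_sqrt_sub_sqrt_le {K ψ : ℝ} (hK : 0 < K) (hψ : 0 < ψ) :
    (√ψ - √K) ^ 2 ≤ ψ - K - K * (log ψ - log K) := by
  have hexpand : (√ψ - √K) ^ 2 = ψ - 2 * √K * √ψ + K := by
    rw [sub_sq, sq_sqrt hψ.le, sq_sqrt hK.le]; ring
  linarith [mul_log_sub_log_le hK hψ, sq_sqrt hK.le]

theorem stmt_7 (K ψ : ℝ) (hK : 0 < K) (hψ : 0 < ψ) :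
    max (ψ - K) 0 - K * max (Real.log ψ - Real.log K) 0 ≥
      (max (Real.sqrt ψ - Real.sqrt K) 0) ^ 2 := by
  rcases le_total ψ K with h | h
  · rw [max_eq_right (sub_nonpos.2 h), max_eq_right (sub_nonpos.2 (log_le_log hψ h)),
      max_eq_right (sub_nonpos.2 (sqrt_le_sqrt h))]
    simp
  · rw [max_eq_left (sub_nonneg.2 h), max_eq_left (sub_nonneg.2 (log_le_log hK h)),
      max_eq_left (sub_nonneg.2 (sqrt_le_sqrt h))]
    exact sq_sqrt_sub_sqrt_le hK hψ
end

section
/- Let K > 0, n ≥ 0, Kₙ = K(1 − 1/2^{n+1}), and let ψ ≥ K_{n+1}. Then ((√ψ − √Kₙ)⁺)² ≥ ψ / 2^{2(n+3)}. -/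
/-!
Writing `x = 1 / 2 ^ (n + 1)`, one has `Kₙ = K (1 - x) ≤ (1 - x / 4)² K (1 - x / 2) = (1 - x / 4)² Kₙ₊₁`,
since the difference is `K x² (10 - x) / 32`. Hence `√Kₙ ≤ (1 - 2⁻⁽ⁿ⁺³⁾) √ψ`, so
`√ψ - √Kₙ ≥ 2⁻⁽ⁿ⁺³⁾ √ψ`, and squaring gives the claim.
-/

lemma sq_mul_le_sq_max_sqrt_sub_sqrt {a ψ s : ℝ} (hs₀ : 0 ≤ s) (hs₁ : s ≤ 1)
    (ha : a ≤ (1 - s) ^ 2 * ψ) :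
    s ^ 2 * ψ ≤ (max (Real.sqrt ψ - Real.sqrt a) 0) ^ 2 := by
  rcases lt_or_ge ψ 0 with hψ | hψ
  · nlinarith [sq_nonneg s, sq_nonneg (max (Real.sqrt ψ - Real.sqrt a) 0)]
  have hsqrt : Real.sqrt a ≤ (1 - s) * Real.sqrt ψ := by
    calc Real.sqrt a ≤ Real.sqrt ((1 - s) ^ 2 * ψ) := Real.sqrt_le_sqrt ha
      _ = (1 - s) * Real.sqrt ψ := by
        rw [Real.sqrt_mul (sq_nonneg _), Real.sqrt_sq (by linarith)]
  calc s ^ 2 * ψ = (s * Real.sqrt ψ) ^ 2 := by rw [mul_pow, Real.sq_sqrt hψ]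
    _ ≤ (max (Real.sqrt ψ - Real.sqrt a) 0) ^ 2 := by
      gcongr
      exact le_max_of_le_left (by linarith)

lemma mul_one_sub_le_sq_mul_mul_one_sub_half {K x : ℝ} (hK : 0 ≤ K) (hx : x ≤ 10) :
    K * (1 - x) ≤ (1 - x / 4) ^ 2 * (K * (1 - x / 2)) := by
  nlinarith [mul_nonneg (mul_nonneg hK (sq_nonneg x)) (sub_nonneg.mpr hx)]

theorem stmt_11 (K : ℝ) (hK : 0 < K) (n : ℕ) (Kn : ℕ → ℝ)
    (hKn : ∀ n, Kn n = K * (1 - 1 / 2 ^ (n + 1)))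
    (ψ : ℝ) (hψ : ψ ≥ Kn (n + 1)) :
    (max (Real.sqrt ψ - Real.sqrt (Kn n)) 0) ^ 2 ≥ ψ / 2 ^ (2 * (n + 3)) := by
  have hpow : (1 : ℝ) ≤ 2 ^ (n + 1) := one_le_pow₀ (by norm_num)
  have hx : (1 : ℝ) / 2 ^ (n + 1) ≤ 10 := by
    rw [div_le_iff₀ (by positivity)]; linarith
  have hs₁ : (1 : ℝ) / 2 ^ (n + 3) ≤ 1 := by
    rw [div_le_one (by positivity)]; exact one_le_pow₀ (by norm_num)
  have hKn_le : Kn n ≤ (1 - 1 / 2 ^ (n + 3)) ^ 2 * ψ := by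
    calc Kn n ≤ (1 - 1 / 2 ^ (n + 1) / 4) ^ 2 * (K * (1 - 1 / 2 ^ (n + 1) / 2)) := by
          rw [hKn]; exact mul_one_sub_le_sq_mul_mul_one_sub_half hK.le hx
      _ = (1 - 1 / 2 ^ (n + 3)) ^ 2 * Kn (n + 1) := by rw [hKn]; ring
      _ ≤ (1 - 1 / 2 ^ (n + 3)) ^ 2 * ψ := by gcongr
  have h := sq_mul_le_sq_max_sqrt_sub_sqrt (by positivity) hs₁ hKn_le
  calc ψ / 2 ^ (2 * (n + 3)) = (1 / 2 ^ (n + 3)) ^ 2 * ψ := by ring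
    _ ≤ _ := h
end

section
/- Let D be a 2×2 symmetric positive definite matrix with entries d₁₁, d₁₂, d₂₂, and let (u₁, u₂) ∈ ℝ² be nonzero. Then the determinant of the 3×3 matrix E with rows (d₁₁u₁ + d₁₂u₂, d₁₂u₁ + d₂₂u₂, 0), (0, d₁₁u₁ + d₁₂u₂, d₁₂u₁ + d₂₂u₂), (d₁₁, 2d₁₂, d₂₂) equals det(D)·(d₁₁u₁² + 2d₁₂u₁u₂ + d₂₂u₂²), which is strictly positive. -/
/-!
Expanding along the last row, `det E = d₂₂ p² - 2 d₁₂ p q + d₁₁ q²` with `(p, q) = D u`: this is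
the quadratic form of `adj D` evaluated at `D u`, and `D · adj D · D = det D · D` turns it into
`det D · uᵀ D u`. Positivity then comes from completing the square,
`d₁₁ · uᵀ D u = (d₁₁ u₁ + d₁₂ u₂)² + det D · u₂²`.
-/

theorem det_fin_three_eq_det_mul_quadratic_form {R : Type*} [CommRing R] (a b c x y : R) :
    !![a * x + b * y, b * x + c * y, 0;
       0, a * x + b * y, b * x + c * y;
       a, 2 * b, c].det = (a * c - b ^ 2) * (a * x ^ 2 + 2 * b * x * y + c * y ^ 2) := by
  simp only [Matrix.det_fin_three, Matrix.of_apply, Matrix.cons_val', Matrix.cons_val_zero,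
    Matrix.cons_val_one, Matrix.cons_val_two, Matrix.empty_val', Matrix.cons_val_fin_one,
    Matrix.head_cons, Matrix.tail_cons, Matrix.head_fin_const]
  ring

theorem binary_quadratic_form_pos {a b c x y : ℝ} (ha : 0 < a) (hdisc : 0 < a * c - b ^ 2)
    (hxy : x ≠ 0 ∨ y ≠ 0) : 0 < a * x ^ 2 + 2 * b * x * y + c * y ^ 2 := by
  have hsquare : a * (a * x ^ 2 + 2 * b * x * y + c * y ^ 2) =
      (a * x + b * y) ^ 2 + (a * c - b ^ 2) * y ^ 2 := by ring
  have hsum : 0 < (a * x + b * y) ^ 2 + (a * c - b ^ 2) * y ^ 2 := by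
    rcases eq_or_ne y 0 with rfl | hy
    · have hx : x ≠ 0 := hxy.resolve_right (not_not.mpr rfl)
      linarith [sq_pos_of_ne_zero (mul_ne_zero ha.ne' hx)]
    · linarith [sq_nonneg (a * x + b * y), mul_pos hdisc (sq_pos_of_ne_zero hy)]
  exact pos_of_mul_pos_right (hsquare ▸ hsum) ha.le

theorem stmt_12 (d11 d12 d22 u1 u2 : ℝ)
    (hpos : 0 < d11) (hdet : 0 < d11 * d22 - d12 ^ 2)
    (hu : u1 ≠ 0 ∨ u2 ≠ 0)
    (E : Matrix (Fin 3) (Fin 3) ℝ)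
    (hE : E = !![d11 * u1 + d12 * u2, d12 * u1 + d22 * u2, 0;
                 0, d11 * u1 + d12 * u2, d12 * u1 + d22 * u2;
                 d11, 2 * d12, d22]) :
    E.det = (d11 * d22 - d12 ^ 2) * (d11 * u1 ^ 2 + 2 * d12 * u1 * u2 + d22 * u2 ^ 2) ∧
    0 < E.det := by
  have hdetE := hE ▸ det_fin_three_eq_det_mul_quadratic_form d11 d12 d22 u1 u2
  exact ⟨hdetE, hdetE ▸ mul_pos hdet (binary_quadratic_form_pos hpos hdet hu)⟩
end
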